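/- arXiv:2512.17463 — 5 statements merged into one kernel-verified Lean document; each statement's English description precedes it below -/
import Mathlib

section
/- Let n ≥ 3, δ > 0, T > 0. Let s : (0,T) → ℝ and γ : (0,T) → (0,∞) be continuously differentiable, and let h be a positive function on D = {(x,t) : 0 < t < T, s(t) < x < s(t)+δ} that is four times continuously differentiable in x and once continuously differentiable in t on D and satisfies ∂_t h + ∂_x(h^n ∂_x³h) = 0 on D. Assume: (i) for each t ∈ (0,T), h(x,t)^n ∂_x³h(x,t) → 0 as x → s(t)⁺; (ii) for each t ∈ (0,T), (h(x,t) − γ(t)(x − s(t)))/(x − s(t)) → 0 as x → s(t)⁺; (iii) for each t ∈ (0,T), ∂_t h(x,t) + γ(t)·s'(t) → 0 as x → s(t)⁺. Then s is constant on (0,T). -/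
/-!
Fix `t`, put `a = s t`, `L = γ t * s' t`, and let `J = hⁿ ∂ₓ³h` be the flux along
`x ↦ h x t`. The no-flux condition gives `J → 0` at `a⁺`, and the equation together with (iii)
gives `∂ₓJ = -∂ₜh → L`, so `J / (x - a) → L` by l'Hôpital. If `L ≠ 0`, multiplying by `L`
reduces both signs to a flux growing like `L² (x - a) / 2`; since `h ≤ C (x - a)` by (ii), this
forces `∂ₓ³(L h) ≥ c (x - a)^(1 - n) ≥ c / (x - a)²` when `n ≥ 3`. Integrating twice,
`∂ₓ(L h) ≥ K - c log (x - a) → +∞`, hence `L h / (x - a) → +∞` by l'Hôpital, contradicting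
`h / (x - a) → γ t`. So `γ t * s' t = 0`, and `γ t > 0` gives `s' = 0`.
-/

open Real Filter Set Topology

theorem tendsto_sub_nhdsGT_zero (a : ℝ) :
    Tendsto (fun x => x - a) (𝓝[>] a) (𝓝[>] 0) := by
  refine tendsto_nhdsWithin_iff.2 ⟨?_, ?_⟩
  · simpa using ((continuous_sub_right a).tendsto a).mono_left nhdsWithin_le_nhds
  · filter_upwards [self_mem_nhdsWithin] with x hx using sub_pos.2 (mem_Ioi.1 hx)

theorem tendsto_nhdsGT_zero_of_tendsto_div_sub {f : ℝ → ℝ} {a γ : ℝ}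
    (h : Tendsto (fun x => f x / (x - a)) (𝓝[>] a) (𝓝 γ)) :
    Tendsto f (𝓝[>] a) (𝓝 0) := by
  have hprod := h.mul ((tendsto_sub_nhdsGT_zero a).mono_right nhdsWithin_le_nhds)
  rw [mul_zero] at hprod
  refine hprod.congr' ?_
  filter_upwards [self_mem_nhdsWithin] with x hx
  exact div_mul_cancel₀ _ (sub_pos.2 hx).ne'

theorem tendsto_div_sub_of_tendsto_deriv {f : ℝ → ℝ} {a : ℝ} {l : Filter ℝ}
    (hf : ∀ᶠ x in 𝓝[>] a, DifferentiableAt ℝ f x) (h0 : Tendsto f (𝓝[>] a) (𝓝 0))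
    (hf' : Tendsto (deriv f) (𝓝[>] a) l) :
    Tendsto (fun x => f x / (x - a)) (𝓝[>] a) l :=
  HasDerivAt.lhopital_zero_nhdsGT (hf.mono fun x hx => hx.hasDerivAt)
    (Eventually.of_forall fun x => (hasDerivAt_id x).sub_const a)
    (Eventually.of_forall fun _ => one_ne_zero)
    h0 ((tendsto_sub_nhdsGT_zero a).mono_right nhdsWithin_le_nhds) (by simpa using hf')

theorem sub_le_sub_of_hasDerivAt_le {F G F' G' : ℝ → ℝ} {x y : ℝ} (hxy : x ≤ y)
    (hF : ∀ u ∈ Icc x y, HasDerivAt F (F' u) u) (hG : ∀ u ∈ Icc x y, HasDerivAt G (G' u) u)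
    (hle : ∀ u ∈ Ioo x y, F' u ≤ G' u) :
    F y - F x ≤ G y - G x := by
  have hmono : MonotoneOn (fun u => G u - F u) (Icc x y) :=
    monotoneOn_of_hasDerivWithinAt_nonneg (f' := fun u => G' u - F' u) (convex_Icc x y)
      (fun u hu => ((hG u hu).sub (hF u hu)).continuousAt.continuousWithinAt)
      (fun u hu => by
        rw [interior_Icc] at hu
        have hu' := Ioo_subset_Icc_self hu
        exact ((hG u hu').sub (hF u hu')).hasDerivWithinAt)
      (fun u hu => by rw [interior_Icc] at hu; exact sub_nonneg.2 (hle u hu))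
  have := hmono (left_mem_Icc.2 hxy) (right_mem_Icc.2 hxy) hxy
  linarith

theorem ContDiffOn.hasDerivAt_iterate_deriv {f : ℝ → ℝ} {s : Set ℝ} {n i : ℕ}
    (hf : ContDiffOn ℝ n f s) (hs : IsOpen s) (hi : i < n) {x : ℝ} (hx : x ∈ s) :
    HasDerivAt (deriv^[i] f) (deriv^[i + 1] f x) x := by
  have hsmooth : ∀ j ≤ n, ContDiffOn ℝ (n - j : ℕ) (deriv^[j] f) s := by
    intro j
    induction j with
    | zero => simpa using hf
    | succ j ih =>
      intro hj
      rw [Function.iterate_succ_apply']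
      exact (ih (by omega)).deriv_of_isOpen hs (by norm_cast; omega)
  rw [Function.iterate_succ_apply']
  exact (((hsmooth i hi.le).differentiableOn (by norm_cast; omega)).differentiableAt
    (hs.mem_nhds hx)).hasDerivAt

theorem tendsto_deriv_atTop_of_div_sq_le_iteratedDeriv_three {f : ℝ → ℝ} {a b c : ℝ}
    (hab : a < b) (hc : 0 < c) (hf : ContDiffOn ℝ 3 f (Ioo a b))
    (h3 : ∀ x ∈ Ioo a b, c / (x - a) ^ 2 ≤ iteratedDeriv 3 f x) :
    Tendsto (deriv f) (𝓝[>] a) atTop := by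
  have hd : ∀ i < 3, ∀ x ∈ Ioo a b, HasDerivAt (deriv^[i] f) (deriv^[i + 1] f x) x :=
    fun i hi x hx => hf.hasDerivAt_iterate_deriv isOpen_Ioo hi hx
  obtain ⟨y, hay, hyb⟩ := exists_between hab
  have hIcc : ∀ x ∈ Ioo a y, Icc x y ⊆ Ioo a b :=
    fun x hx u hu => ⟨hx.1.trans_le hu.1, hu.2.trans_lt hyb⟩
  set C := deriv^[2] f y + c / (y - a)
  have hf2 : ∀ x ∈ Ioo a y, deriv^[2] f x ≤ C - c / (x - a) := by
    intro x hx
    have := sub_le_sub_of_hasDerivAt_le hx.2.le (F := fun u => -c * (u - a)⁻¹)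
      (F' := fun u => -c * (-1 / (u - a) ^ 2)) (G' := deriv^[3] f)
      (fun u hu => (((hasDerivAt_id u).sub_const a).inv
        (sub_pos.2 (hIcc x hx hu).1).ne').const_mul (-c))
      (fun u hu => hd 2 (by norm_num) u (hIcc x hx hu))
      (fun u hu => by
        rw [← iteratedDeriv_eq_iterate]
        convert h3 u (hIcc x hx (Ioo_subset_Icc_self hu)) using 1
        ring)
    simp only [div_eq_mul_inv, C] at this ⊢
    linarith
  have hf1 : ∀ x ∈ Ioo a y,
      deriv f y - C * (y - x) + c * log (y - a) - c * log (x - a) ≤ deriv f x := by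
    intro x hx
    have := sub_le_sub_of_hasDerivAt_le hx.2.le (F := deriv f) (F' := deriv^[2] f)
      (G := fun u => C * u - c * log (u - a)) (G' := fun u => C * 1 - c * (1 / (u - a)))
      (fun u hu => hd 1 (by norm_num) u (hIcc x hx hu))
      (fun u hu => ((hasDerivAt_id u).const_mul C).sub
        ((((hasDerivAt_id u).sub_const a).log (sub_pos.2 (hIcc x hx hu).1).ne').const_mul c))
      (fun u hu => by
        have := hf2 u ⟨hx.1.trans hu.1, hu.2⟩
        simp only [mul_one, div_eq_mul_inv] at this ⊢
        linarith)
    linarith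
  have hlow : Tendsto (fun x => (deriv f y - C * (y - x) + c * log (y - a)) + -(c * log (x - a)))
      (𝓝[>] a) atTop :=
    Tendsto.add_atTop ((Continuous.tendsto (by fun_prop) a).mono_left nhdsWithin_le_nhds)
      (tendsto_neg_atBot_atTop.comp
        ((tendsto_log_nhdsGT_zero.comp (tendsto_sub_nhdsGT_zero a)).const_mul_atBot hc))
  refine tendsto_atTop_mono' _ ?_ hlow
  filter_upwards [Ioo_mem_nhdsGT hay] with x hx
  linarith [hf1 x hx]

theorem div_rpow_div_sq_le {n d v C m w : ℝ} (hn : 3 ≤ n) (hd : 0 < d) (hd1 : d ≤ 1)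
    (hv : 0 < v) (hvC : v ≤ C * d) (hm : 0 ≤ m) (hw : m * d ≤ v ^ n * w) :
    m / C ^ n / d ^ 2 ≤ w := by
  have hC : 0 < C := pos_of_mul_pos_left (hv.trans_le hvC) hd.le
  have hdn : d ^ n ≤ d ^ (3 : ℕ) := by
    rw [← Real.rpow_natCast]
    exact Real.rpow_le_rpow_of_exponent_ge hd hd1 (by exact_mod_cast hn)
  calc m / C ^ n / d ^ 2 = m * d / (C ^ n * d ^ 3) := by field_simp
    _ ≤ m * d / (C ^ n * d ^ n) := by gcongr
    _ = m * d / (C * d) ^ n := by rw [Real.mul_rpow hC.le hd.le]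
    _ ≤ m * d / v ^ n := by gcongr
    _ ≤ w := by rw [div_le_iff₀ (by positivity)]; linarith

theorem eq_zero_of_tendsto_deriv_flux {u : ℝ → ℝ} {a b n γ L : ℝ} (hn : 3 ≤ n) (hab : a < b)
    (hu : ContDiffOn ℝ 4 u (Ioo a b)) (hpos : ∀ x ∈ Ioo a b, 0 < u x)
    (hslope : Tendsto (fun x => u x / (x - a)) (𝓝[>] a) (𝓝 γ))
    (hflux : Tendsto (fun x => u x ^ n * iteratedDeriv 3 u x) (𝓝[>] a) (𝓝 0))
    (hdflux : Tendsto (deriv fun x => u x ^ n * iteratedDeriv 3 u x) (𝓝[>] a) (𝓝 L)) :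
    L = 0 := by
  by_contra hL
  have hu' : ∀ x ∈ Ioo a b, DifferentiableAt ℝ u x := fun x hx =>
    (hu.differentiableOn (by norm_num)).differentiableAt (isOpen_Ioo.mem_nhds hx)
  have hJ : ∀ x ∈ Ioo a b, DifferentiableAt ℝ (fun x => u x ^ n * iteratedDeriv 3 u x) x := by
    intro x hx
    rw [iteratedDeriv_eq_iterate]
    exact ((hu' x hx).rpow_const (Or.inl (hpos x hx).ne')).mul
      (hu.hasDerivAt_iterate_deriv isOpen_Ioo (i := 3) (by norm_num) hx).differentiableAt
  have hJslope := tendsto_div_sub_of_tendsto_deriv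
    (eventually_of_mem (Ioo_mem_nhdsGT hab) hJ) hflux hdflux
  set C := |γ| + 1
  have hC : 0 < C := by positivity
  set m := L * L / 2
  have hm : 0 < m := half_pos (mul_self_pos.2 hL)
  have hnear : ∀ᶠ x in 𝓝[>] a, m ≤ L * ((u x ^ n * iteratedDeriv 3 u x) / (x - a)) ∧
      u x / (x - a) ≤ C ∧ x ∈ Ioo a (min b (a + 1)) :=
    ((hJslope.const_mul L).eventually (eventually_ge_nhds (half_lt_self (mul_self_pos.2 hL)))).and
      ((hslope.eventually (eventually_le_nhds (by linarith [le_abs_self γ]))).and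
        (Ioo_mem_nhdsGT (lt_min hab (lt_add_one a))))
  obtain ⟨b', hab', hnear'⟩ := mem_nhdsGT_iff_exists_Ioo_subset.1 hnear
  have hsub : Ioo a b' ⊆ Ioo a b := fun x hx =>
    ⟨hx.1, (hnear' hx).2.2.2.trans_le (min_le_left _ _)⟩
  have h3 : ∀ x ∈ Ioo a b', m / C ^ n / (x - a) ^ 2 ≤ iteratedDeriv 3 (fun x => L * u x) x := by
    intro x hx
    obtain ⟨hJx, huC, hxa, hxb⟩ := hnear' hx
    have hd : 0 < x - a := sub_pos.2 hxa
    rw [iteratedDeriv_const_mul_field]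
    refine div_rpow_div_sq_le hn hd (by linarith [min_le_right b (a + 1)]) (hpos x (hsub hx))
      ((div_le_iff₀ hd).1 huC) hm.le ?_
    rw [mul_div_assoc', le_div_iff₀ hd] at hJx
    linarith
  have hLu : ContDiffOn ℝ 3 (fun x => L * u x) (Ioo a b') :=
    (contDiffOn_const.mul (hu.mono hsub)).of_le (by norm_num)
  have hblow : Tendsto (fun x => L * u x / (x - a)) (𝓝[>] a) atTop := by
    refine tendsto_div_sub_of_tendsto_deriv
      (eventually_of_mem (Ioo_mem_nhdsGT hab) fun x hx => (hu' x hx).const_mul L) ?_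
      (tendsto_deriv_atTop_of_div_sq_le_iteratedDeriv_three hab'
        (div_pos hm (Real.rpow_pos_of_pos hC n)) hLu h3)
    simpa using (tendsto_nhdsGT_zero_of_tendsto_div_sub hslope).const_mul L
  exact not_tendsto_nhds_of_tendsto_atTop hblow _
    (by simpa [mul_div_assoc] using hslope.const_mul L)

theorem stmt_0_general (n δ T : ℝ) (hn : 3 ≤ n) (hδ : 0 < δ)
    (s γ : ℝ → ℝ)
    (hs : ContDiffOn ℝ 1 s (Set.Ioo 0 T))
    (hγpos : ∀ t ∈ Set.Ioo (0:ℝ) T, 0 < γ t)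
    (h : ℝ → ℝ → ℝ)
    (hpos : ∀ t ∈ Set.Ioo (0:ℝ) T, ∀ x ∈ Set.Ioo (s t) (s t + δ), 0 < h x t)
    -- four continuous derivatives in `x`
    (hCx : ∀ t ∈ Set.Ioo (0:ℝ) T,
      ContDiffOn ℝ 4 (fun x => h x t) (Set.Ioo (s t) (s t + δ)))
    -- the thin-film equation `∂ₜ h + ∂ₓ (hⁿ ∂ₓ³ h) = 0` on `D`
    (hPDE : ∀ t ∈ Set.Ioo (0:ℝ) T, ∀ x ∈ Set.Ioo (s t) (s t + δ),
      deriv (fun τ => h x τ) t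
        + deriv (fun y => (h y t) ^ n * iteratedDeriv 3 (fun z => h z t) y) x = 0)
    -- (i) no-flux condition
    (hflux : ∀ t ∈ Set.Ioo (0:ℝ) T,
      Tendsto (fun x => (h x t) ^ n * iteratedDeriv 3 (fun z => h z t) x)
        (𝓝[>] (s t)) (𝓝 0))
    -- (ii) `h(x,t) = γ(t)(x − s(t)) + o(x − s(t))`
    (hlin : ∀ t ∈ Set.Ioo (0:ℝ) T,
      Tendsto (fun x => (h x t - γ t * (x - s t)) / (x - s t)) (𝓝[>] (s t)) (𝓝 0))
    -- (iii) `∂ₜ h(x,t) = −γ(t) s'(t) + o(1)`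
    (htlin : ∀ t ∈ Set.Ioo (0:ℝ) T,
      Tendsto (fun x => deriv (fun τ => h x τ) t + γ t * deriv s t)
        (𝓝[>] (s t)) (𝓝 0)) :
    ∀ t₁ ∈ Set.Ioo (0:ℝ) T, ∀ t₂ ∈ Set.Ioo (0:ℝ) T, s t₁ = s t₂ := by
  have hs' : EqOn (deriv s) 0 (Ioo 0 T) := by
    intro t ht
    have hD : Ioo (s t) (s t + δ) ∈ 𝓝[>] (s t) := Ioo_mem_nhdsGT (lt_add_of_pos_right _ hδ)
    have hslope : Tendsto (fun x => h x t / (x - s t)) (𝓝[>] (s t)) (𝓝 (γ t)) := by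
      refine (zero_add (γ t) ▸ (hlin t ht).add_const (γ t)).congr' ?_
      filter_upwards [self_mem_nhdsWithin] with x hx
      field_simp [(sub_pos.2 (mem_Ioi.1 hx)).ne']
      ring
    have hdflux : Tendsto (deriv fun y => h y t ^ n * iteratedDeriv 3 (fun z => h z t) y)
        (𝓝[>] (s t)) (𝓝 (γ t * deriv s t)) := by
      refine (sub_zero (γ t * deriv s t) ▸ tendsto_const_nhds.sub (htlin t ht)).congr' ?_
      filter_upwards [hD] with x hx
      linarith [hPDE t ht x hx]
    have hL := eq_zero_of_tendsto_deriv_flux hn (lt_add_of_pos_right _ hδ) (hCx t ht) (hpos t ht)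
      hslope (hflux t ht) hdflux
    exact (mul_eq_zero.1 hL).resolve_left (hγpos t ht).ne'
  intro t₁ ht₁ t₂ ht₂
  exact isOpen_Ioo.is_const_of_deriv_eq_zero isPreconnected_Ioo
    (hs.differentiableOn one_ne_zero) hs' ht₁ ht₂

/-- Regularity implies fixed support for the thin-film equation with `n ≥ 3`:
if `h` is a `C^{4,1}` positive solution of `∂ₜh + ∂ₓ(hⁿ ∂ₓ³h) = 0` on
`D = {(x,t) : 0 < t < T, s(t) < x < s(t)+δ}` which satisfies the no-flux condition
`hⁿ ∂ₓ³h → 0` and the expansions `h = γ(t)(x−s(t)) + o(x−s(t))`,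
`∂ₜh = −γ(t) s'(t) + o(1)` as `x → s(t)⁺`, with `γ > 0`, then `s` is constant. -/
theorem stmt_0 (n δ T : ℝ) (hn : 3 ≤ n) (hδ : 0 < δ) (hT : 0 < T)
    (s γ : ℝ → ℝ)
    (hs : ContDiffOn ℝ 1 s (Set.Ioo 0 T))
    (hγ : ContDiffOn ℝ 1 γ (Set.Ioo 0 T))
    (hγpos : ∀ t ∈ Set.Ioo (0:ℝ) T, 0 < γ t)
    (h : ℝ → ℝ → ℝ)
    (hpos : ∀ t ∈ Set.Ioo (0:ℝ) T, ∀ x ∈ Set.Ioo (s t) (s t + δ), 0 < h x t)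
    -- four continuous derivatives in `x`
    (hCx : ∀ t ∈ Set.Ioo (0:ℝ) T,
      ContDiffOn ℝ 4 (fun x => h x t) (Set.Ioo (s t) (s t + δ)))
    -- one derivative in `t`, continuous on `D`
    (hCt : ∀ t ∈ Set.Ioo (0:ℝ) T, ∀ x ∈ Set.Ioo (s t) (s t + δ),
      DifferentiableAt ℝ (fun τ => h x τ) t)
    (hCt' : ContinuousOn (fun p : ℝ × ℝ => deriv (fun τ => h p.1 τ) p.2)
      {p : ℝ × ℝ | p.2 ∈ Set.Ioo (0:ℝ) T ∧ p.1 ∈ Set.Ioo (s p.2) (s p.2 + δ)})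
    -- the thin-film equation `∂ₜ h + ∂ₓ (hⁿ ∂ₓ³ h) = 0` on `D`
    (hPDE : ∀ t ∈ Set.Ioo (0:ℝ) T, ∀ x ∈ Set.Ioo (s t) (s t + δ),
      deriv (fun τ => h x τ) t
        + deriv (fun y => (h y t) ^ n * iteratedDeriv 3 (fun z => h z t) y) x = 0)
    -- (i) no-flux condition
    (hflux : ∀ t ∈ Set.Ioo (0:ℝ) T,
      Tendsto (fun x => (h x t) ^ n * iteratedDeriv 3 (fun z => h z t) x)
        (𝓝[>] (s t)) (𝓝 0))
    -- (ii) `h(x,t) = γ(t)(x − s(t)) + o(x − s(t))`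
    (hlin : ∀ t ∈ Set.Ioo (0:ℝ) T,
      Tendsto (fun x => (h x t - γ t * (x - s t)) / (x - s t)) (𝓝[>] (s t)) (𝓝 0))
    -- (iii) `∂ₜ h(x,t) = −γ(t) s'(t) + o(1)`
    (htlin : ∀ t ∈ Set.Ioo (0:ℝ) T,
      Tendsto (fun x => deriv (fun τ => h x τ) t + γ t * deriv s t)
        (𝓝[>] (s t)) (𝓝 0)) :
    ∀ t₁ ∈ Set.Ioo (0:ℝ) T, ∀ t₂ ∈ Set.Ioo (0:ℝ) T, s t₁ = s t₂ :=
  stmt_0_general n δ T hn hδ s γ hs hγpos h hpos hCx hPDE hflux hlin htlin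
end

section
/- Let γ > 0 and 0 < δ < 1, and let h : (0,δ) → (0,∞) be three times differentiable with h(ξ)/(γ·ξ·(ln(1/ξ))^{1/3}) → 1 and 3ξ²·(ln(1/ξ))^{2/3}·h'''(ξ)/γ → 1 as ξ → 0⁺. Then the function ξ ↦ h(ξ)³·h'''(ξ)² is not Lebesgue integrable on (0,δ); equivalently, ∫₀^δ h(ξ)³ h'''(ξ)² dξ = +∞. -/
/-!
Near the contact point the two asymptotic equivalences multiply to
`h³ (h''')² ~ (γ⁵/9) ξ⁻¹ (ln 1/ξ)^{-1/3}`, and `ξ⁻¹ (ln 1/ξ)^{-1/3}` is, up to the factor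
`-3/2`, the derivative of `(ln 1/ξ)^{2/3}`, which tends to `+∞` as `ξ → 0⁺`. A function whose
derivative is dominated by the integrand cannot blow up if the integrand is integrable near `0`.
-/

open Real Filter Set Topology MeasureTheory Asymptotics

lemma tendsto_log_one_div_nhdsGT_zero :
    Tendsto (fun ξ : ℝ => log (1 / ξ)) (𝓝[>] 0) atTop := by
  refine (tendsto_neg_atBot_atTop.comp tendsto_log_nhdsGT_zero).congr fun ξ => ?_
  simp [log_inv]

lemma hasDerivAt_log_one_div_rpow {ξ : ℝ} (s : ℝ) (hξ : ξ ≠ 0) (hL : log (1 / ξ) ≠ 0) :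
    HasDerivAt (fun x => log (1 / x) ^ (s + 1)) (-(s + 1) * (ξ⁻¹ * log (1 / ξ) ^ s)) ξ := by
  have hlog : HasDerivAt (fun x => log (1 / x)) (-ξ⁻¹) ξ := by
    simp only [one_div, log_inv]
    exact (hasDerivAt_log hξ).neg
  convert hlog.rpow_const (Or.inl hL) using 1
  rw [add_sub_cancel_right]
  ring

theorem not_integrableOn_of_inv_mul_log_one_div_rpow_isBigO {F : Type*} [NormedAddCommGroup F]
    {s : ℝ} (hs : -1 < s) {g : ℝ → F} {k : Set ℝ} (hk : k ∈ 𝓝[>] 0)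
    (hg : (fun ξ => ξ⁻¹ * log (1 / ξ) ^ s) =O[𝓝[>] 0] g) : ¬IntegrableOn g k := by
  have hderiv : ∀ᶠ ξ in 𝓝[>] 0,
      HasDerivAt (fun x => log (1 / x) ^ (s + 1)) (-(s + 1) * (ξ⁻¹ * log (1 / ξ) ^ s)) ξ := by
    filter_upwards [self_mem_nhdsWithin, tendsto_log_one_div_nhdsGT_zero.eventually_gt_atTop 0]
      with ξ hξ hL using hasDerivAt_log_one_div_rpow s (ne_of_gt hξ) hL.ne'
  refine not_integrableOn_of_tendsto_norm_atTop_of_deriv_isBigO_filter _ hk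
    (hderiv.mono fun ξ hξ => hξ.differentiableAt) ?_ ?_
  · exact tendsto_norm_atTop_atTop.comp
      ((tendsto_rpow_atTop (by linarith)).comp tendsto_log_one_div_nhdsGT_zero)
  · have hderiv_eq : deriv (fun x => log (1 / x) ^ (s + 1)) =ᶠ[𝓝[>] 0]
        fun ξ => -(s + 1) * (ξ⁻¹ * log (1 / ξ) ^ s) := hderiv.mono fun ξ hξ => hξ.deriv
    exact hderiv_eq.trans_isBigO ((isBigO_const_mul_self _ _ _).trans hg)

lemma inv_mul_rpow_neg_one_third_eq {γ ξ L : ℝ} (hγ : γ ≠ 0) (hξ : ξ ≠ 0) (hL : 0 < L) :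
    ξ⁻¹ * L ^ (-1 / 3 : ℝ) = 9 / γ ^ 5 *
      ((γ * ξ * L ^ ((1 : ℝ) / 3)) ^ 3 * (γ / (3 * ξ ^ 2 * L ^ ((2 : ℝ) / 3))) ^ 2) := by
  have h2 : L ^ ((2 : ℝ) / 3) = (L ^ ((1 : ℝ) / 3)) ^ 2 := by
    rw [← rpow_natCast, ← rpow_mul hL.le]; norm_num
  have hneg : L ^ (-1 / 3 : ℝ) = (L ^ ((1 : ℝ) / 3))⁻¹ := by
    rw [← rpow_neg hL.le]; norm_num
  rw [h2, hneg]
  field_simp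
  ring

theorem stmt_5_general (γ δ : ℝ) (hγ : 0 < γ) (hδ0 : 0 < δ) (h : ℝ → ℝ)
    (hasymp : Tendsto (fun ξ => h ξ / (γ * ξ * (Real.log (1/ξ)) ^ ((1:ℝ)/3)))
      (𝓝[>] 0) (𝓝 1))
    (hasymp3 : Tendsto
      (fun ξ => 3 * ξ^2 * (Real.log (1/ξ)) ^ ((2:ℝ)/3) * iteratedDeriv 3 h ξ / γ)
      (𝓝[>] 0) (𝓝 1)) :
    ¬ IntegrableOn (fun ξ => (h ξ)^3 * (iteratedDeriv 3 h ξ)^2) (Set.Ioo 0 δ) := by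
  have h_equiv : h ~[𝓝[>] 0] fun ξ => γ * ξ * log (1 / ξ) ^ ((1 : ℝ) / 3) :=
    isEquivalent_of_tendsto_one hasymp
  have h3_equiv :
      iteratedDeriv 3 h ~[𝓝[>] 0] fun ξ => γ / (3 * ξ ^ 2 * log (1 / ξ) ^ ((2 : ℝ) / 3)) :=
    isEquivalent_of_tendsto_one <| hasymp3.congr fun ξ => by
      rw [Pi.div_apply, div_div_eq_mul_div, mul_comm]
  have h_model : (fun ξ => ξ⁻¹ * log (1 / ξ) ^ (-1 / 3 : ℝ)) =ᶠ[𝓝[>] 0] fun ξ =>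
      9 / γ ^ 5 * ((γ * ξ * log (1 / ξ) ^ ((1 : ℝ) / 3)) ^ 3 *
        (γ / (3 * ξ ^ 2 * log (1 / ξ) ^ ((2 : ℝ) / 3))) ^ 2) := by
    filter_upwards [self_mem_nhdsWithin, tendsto_log_one_div_nhdsGT_zero.eventually_gt_atTop 0]
      with ξ hξ hL using inv_mul_rpow_neg_one_third_eq hγ.ne' (ne_of_gt hξ) hL
  refine not_integrableOn_of_inv_mul_log_one_div_rpow_isBigO (s := -1 / 3) (by norm_num)
    (Ioo_mem_nhdsGT hδ0) ?_
  exact h_model.trans_isBigO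
    ((isBigO_const_mul_self _ _ _).trans ((h_equiv.pow 3).mul (h3_equiv.pow 2)).isBigO_symm)

/-- If `h > 0` is three times differentiable on `(0,δ)` with
`h(ξ) ≈ γ ξ (ln(1/ξ))^{1/3}` and `h'''(ξ) ≈ (γ/3) ξ^{−2} (ln(1/ξ))^{−2/3}` as `ξ → 0⁺`,
then `ξ ↦ h(ξ)³ h'''(ξ)²` is not Lebesgue integrable on `(0,δ)`. -/
theorem stmt_5 (γ δ : ℝ) (hγ : 0 < γ) (hδ0 : 0 < δ) (hδ1 : δ < 1)
    (h : ℝ → ℝ) (hpos : ∀ ξ ∈ Set.Ioo 0 δ, 0 < h ξ)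
    (hdiff : ∀ ξ ∈ Set.Ioo 0 δ, DifferentiableAt ℝ h ξ ∧
      DifferentiableAt ℝ (deriv h) ξ ∧ DifferentiableAt ℝ (deriv (deriv h)) ξ)
    (hasymp : Tendsto (fun ξ => h ξ / (γ * ξ * (Real.log (1/ξ)) ^ ((1:ℝ)/3)))
      (𝓝[>] 0) (𝓝 1))
    (hasymp3 : Tendsto
      (fun ξ => 3 * ξ^2 * (Real.log (1/ξ)) ^ ((2:ℝ)/3) * iteratedDeriv 3 h ξ / γ)
      (𝓝[>] 0) (𝓝 1)) :
    ¬ IntegrableOn (fun ξ => (h ξ)^3 * (iteratedDeriv 3 h ξ)^2) (Set.Ioo 0 δ) :=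
  stmt_5_general γ δ hγ hδ0 h hasymp hasymp3
end

section
/- Let γ > 0 and define f : (0,1) → ℝ by f(ξ) = γ·ξ·(ln(1/ξ))^{1/3}. Then the function δ ↦ (γ³/6)·f'(δ)² − ∫_δ^{1/2} f(ξ)³·f'''(ξ)² dξ converges to a finite limit as δ → 0⁺. Moreover, each of the two terms separately is asymptotic to (γ⁵/6)·(ln(1/δ))^{2/3} as δ → 0⁺, i.e. both (γ³/6)f'(δ)²/((γ⁵/6)(ln(1/δ))^{2/3}) → 1 and (∫_δ^{1/2} f³(f''')² dξ)/((γ⁵/6)(ln(1/δ))^{2/3}) → 1. -/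
/-!
Write `v = (ln (1/ξ))^{1/3}`, so that `v' = -1/(3ξv²)`. Then everything is explicit:
`f' = γ (v - 1/(3v²))` and `f³ (f''')² = (γ⁵/ξ)(1/(9v) - 20/(81v⁷) + 100/(729v¹³))`, which is the
derivative of `-γ⁵ (v²/6 + 5/(27v⁴) - 10/(243v¹⁰))`. Hence the boundary term and the dissipation
integral both equal `γ⁵v²/6` plus a polynomial in `1/v`, and `1/v → 0` as `δ → 0⁺`: the divergent
parts `γ⁵v²/6` cancel exactly in the difference and dominate each ratio.
-/

open Real Filter Set Topology MeasureTheory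

noncomputable section

def cbrtLogInv (x : ℝ) : ℝ := (-Real.log x) ^ ((1:ℝ)/3)

def profile (γ x : ℝ) : ℝ := γ * x * cbrtLogInv x

def profileDeriv (γ x : ℝ) : ℝ := γ * (cbrtLogInv x - 1 / (3 * cbrtLogInv x ^ 2))

def profileDeriv2 (γ x : ℝ) : ℝ :=
  -(γ / x) * (1 / (3 * cbrtLogInv x ^ 2) + 2 / (9 * cbrtLogInv x ^ 5))

def profileDeriv3 (γ x : ℝ) : ℝ :=
  γ / x ^ 2 * (1 / (3 * cbrtLogInv x ^ 2) - 10 / (27 * cbrtLogInv x ^ 8))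

def dissipationPrimitive (γ x : ℝ) : ℝ :=
  -γ ^ 5 * (cbrtLogInv x ^ 2 / 6 + 5 / (27 * cbrtLogInv x ^ 4) - 10 / (243 * cbrtLogInv x ^ 10))

end

section Derivatives

variable (γ : ℝ) {x : ℝ}

lemma cbrtLogInv_pos (hx : x ∈ Ioo (0:ℝ) 1) : 0 < cbrtLogInv x :=
  rpow_pos_of_pos (neg_pos.2 (log_neg hx.1 hx.2)) _

lemma cbrtLogInv_sq (hx : x ∈ Ioo (0:ℝ) 1) :
    cbrtLogInv x ^ 2 = Real.log (1 / x) ^ ((2:ℝ)/3) := by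
  rw [one_div, log_inv, cbrtLogInv, ← rpow_natCast, ← rpow_mul (neg_pos.2 (log_neg hx.1 hx.2)).le]
  norm_num

lemma hasDerivAt_cbrtLogInv (hx : x ∈ Ioo (0:ℝ) 1) :
    HasDerivAt cbrtLogInv (-(1 / (3 * x * cbrtLogInv x ^ 2))) x := by
  have hu : 0 < -Real.log x := neg_pos.2 (log_neg hx.1 hx.2)
  have h := (hasDerivAt_rpow_const (p := (1:ℝ)/3) (Or.inl hu.ne')).comp x
    (hasDerivAt_log hx.1.ne').neg
  refine h.congr_deriv ?_
  rw [cbrtLogInv_sq hx, one_div x, log_inv, show (1:ℝ)/3 - 1 = -(2/3) by norm_num, rpow_neg hu.le]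
  have := hx.1.ne'
  field_simp

lemma hasDerivAt_profile (hx : x ∈ Ioo (0:ℝ) 1) :
    HasDerivAt (profile γ) (profileDeriv γ x) x := by
  have := (cbrtLogInv_pos hx).ne'
  have := hx.1.ne'
  refine (((hasDerivAt_id x).const_mul γ).mul (hasDerivAt_cbrtLogInv hx)).congr_deriv ?_
  simp only [id, profileDeriv]
  field_simp
  ring

lemma hasDerivAt_profileDeriv (hx : x ∈ Ioo (0:ℝ) 1) :
    HasDerivAt (profileDeriv γ) (profileDeriv2 γ x) x := by
  have hv := hasDerivAt_cbrtLogInv hx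
  have := (cbrtLogInv_pos hx).ne'
  have := hx.1.ne'
  have h2 : (3:ℝ) * cbrtLogInv x ^ 2 ≠ 0 := by positivity
  refine ((hv.sub ((hasDerivAt_const x 1).div ((hv.pow 2).const_mul 3) h2)).const_mul
    γ).congr_deriv ?_
  simp only [Pi.pow_apply, profileDeriv2]
  field_simp
  ring

lemma hasDerivAt_profileDeriv2 (hx : x ∈ Ioo (0:ℝ) 1) :
    HasDerivAt (profileDeriv2 γ) (profileDeriv3 γ x) x := by
  have hv := hasDerivAt_cbrtLogInv hx
  have := (cbrtLogInv_pos hx).ne'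
  have hx0 := hx.1.ne'
  have h2 : (3:ℝ) * cbrtLogInv x ^ 2 ≠ 0 := by positivity
  have h5 : (9:ℝ) * cbrtLogInv x ^ 5 ≠ 0 := by positivity
  refine ((((hasDerivAt_const x γ).div (hasDerivAt_id x) hx0).neg).mul
    (((hasDerivAt_const x 1).div ((hv.pow 2).const_mul 3) h2).add
      ((hasDerivAt_const x 2).div ((hv.pow 5).const_mul 9) h5))).congr_deriv ?_
  simp only [Pi.pow_apply, Pi.neg_apply, Pi.div_apply, Pi.add_apply, id, profileDeriv3]
  field_simp
  ring

lemma hasDerivAt_dissipationPrimitive (hx : x ∈ Ioo (0:ℝ) 1) :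
    HasDerivAt (dissipationPrimitive γ) (profile γ x ^ 3 * profileDeriv3 γ x ^ 2) x := by
  have hv := hasDerivAt_cbrtLogInv hx
  have := (cbrtLogInv_pos hx).ne'
  have := hx.1.ne'
  have h4 : (27:ℝ) * cbrtLogInv x ^ 4 ≠ 0 := by positivity
  have h10 : (243:ℝ) * cbrtLogInv x ^ 10 ≠ 0 := by positivity
  refine (((((hv.pow 2).div_const 6).add
      ((hasDerivAt_const x 5).div ((hv.pow 4).const_mul 27) h4)).sub
      ((hasDerivAt_const x 10).div ((hv.pow 10).const_mul 243) h10)).const_mul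
        (-γ ^ 5)).congr_deriv ?_
  simp only [Pi.pow_apply, profile, profileDeriv3]
  field_simp
  ring

lemma continuousOn_profileDeriv3 : ContinuousOn (profileDeriv3 γ) (Ioo 0 1) := fun x hx => by
  have := (hasDerivAt_cbrtLogInv hx).continuousAt
  have := (cbrtLogInv_pos hx).ne'
  have := hx.1.ne'
  refine ContinuousAt.continuousWithinAt ?_
  unfold profileDeriv3
  fun_prop (disch := simp [*])

end Derivatives

lemma eqOn_deriv_of_eqOn_of_hasDerivAt {f g g' : ℝ → ℝ} {s : Set ℝ} (hfg : EqOn f g s)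
    (hs : IsOpen s) (hg : ∀ x ∈ s, HasDerivAt g (g' x) x) : EqOn (deriv f) g' s :=
  fun x hx => (hfg.deriv hs hx).trans (hg x hx).deriv

section Profile

variable {γ : ℝ} {f : ℝ → ℝ}

lemma eqOn_deriv_of_eqOn_profile (hf : EqOn f (profile γ) (Ioo 0 1)) :
    EqOn (deriv f) (profileDeriv γ) (Ioo 0 1) :=
  eqOn_deriv_of_eqOn_of_hasDerivAt hf isOpen_Ioo fun _ hx => hasDerivAt_profile γ hx

lemma eqOn_iteratedDeriv_three_of_eqOn_profile (hf : EqOn f (profile γ) (Ioo 0 1)) :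
    EqOn (iteratedDeriv 3 f) (profileDeriv3 γ) (Ioo 0 1) := by
  have h2 := eqOn_deriv_of_eqOn_of_hasDerivAt (eqOn_deriv_of_eqOn_profile hf) isOpen_Ioo
    fun _ hx => hasDerivAt_profileDeriv γ hx
  have h3 := eqOn_deriv_of_eqOn_of_hasDerivAt h2 isOpen_Ioo
    fun _ hx => hasDerivAt_profileDeriv2 γ hx
  rwa [iteratedDeriv_succ, iteratedDeriv_succ, iteratedDeriv_one]

lemma integral_dissipation_of_eqOn_profile (hf : EqOn f (profile γ) (Ioo 0 1)) {a b : ℝ}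
    (ha : 0 < a) (hab : a ≤ b) (hb : b < 1) :
    ∫ ξ in a..b, f ξ ^ 3 * iteratedDeriv 3 f ξ ^ 2 =
      dissipationPrimitive γ b - dissipationPrimitive γ a := by
  have hsub : uIcc a b ⊆ Ioo 0 1 := by
    rw [uIcc_of_le hab]
    exact Icc_subset_Ioo ha hb
  have h3 := eqOn_iteratedDeriv_three_of_eqOn_profile hf
  rw [intervalIntegral.integral_congr (g := fun ξ => profile γ ξ ^ 3 * profileDeriv3 γ ξ ^ 2)
    fun ξ hξ => by simp only [hf (hsub hξ), h3 (hsub hξ)]]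
  refine intervalIntegral.integral_eq_sub_of_hasDerivAt
    (fun ξ hξ => hasDerivAt_dissipationPrimitive γ (hsub hξ)) (ContinuousOn.intervalIntegrable ?_)
  exact (((HasDerivAt.continuousOn fun _ hx => hasDerivAt_profile γ hx).pow 3).mul
    ((continuousOn_profileDeriv3 γ).pow 2)).mono hsub

end Profile

lemma tendsto_of_eq_comp_inv_cbrtLogInv {φ g : ℝ → ℝ} {l : ℝ} (hφ : Continuous φ) (hl : φ 0 = l)
    (hg : ∀ δ ∈ Ioo (0:ℝ) 1, g δ = φ (cbrtLogInv δ)⁻¹) : Tendsto g (𝓝[>] 0) (𝓝 l) := by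
  have hv : Tendsto (fun δ => (cbrtLogInv δ)⁻¹) (𝓝[>] 0) (𝓝 0) :=
    ((tendsto_rpow_atTop (by norm_num)).comp
      (tendsto_neg_atBot_atTop.comp tendsto_log_nhdsGT_zero)).inv_tendsto_atTop
  rw [← hl]
  refine ((hφ.tendsto 0).comp hv).congr' ?_
  filter_upwards [Ioo_mem_nhdsGT one_pos] with δ hδ using (hg δ hδ).symm

lemma tendsto_boundary_sub_dissipation (γ : ℝ) :
    Tendsto (fun δ => γ ^ 3 / 6 * profileDeriv γ δ ^ 2 -
        (dissipationPrimitive γ (1/2) - dissipationPrimitive γ δ))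
      (𝓝[>] 0) (𝓝 (-dissipationPrimitive γ (1/2))) := by
  refine tendsto_of_eq_comp_inv_cbrtLogInv (φ := fun t => -dissipationPrimitive γ (1/2) -
      γ ^ 5 / 9 * t - γ ^ 5 / 6 * t ^ 4 + 10 * γ ^ 5 / 243 * t ^ 10) (by fun_prop) (by simp)
    fun δ hδ => ?_
  have := (cbrtLogInv_pos hδ).ne'
  generalize dissipationPrimitive γ (1/2) = c
  simp only [profileDeriv, dissipationPrimitive]
  field_simp
  ring

lemma tendsto_boundary_div {γ : ℝ} (hγ : γ ≠ 0) :
    Tendsto (fun δ => γ ^ 3 / 6 * profileDeriv γ δ ^ 2 / (γ ^ 5 / 6 * cbrtLogInv δ ^ 2))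
      (𝓝[>] 0) (𝓝 1) := by
  refine tendsto_of_eq_comp_inv_cbrtLogInv (φ := fun t => (1 - t ^ 3 / 3) ^ 2) (by fun_prop)
    (by simp) fun δ hδ => ?_
  have := (cbrtLogInv_pos hδ).ne'
  simp only [profileDeriv]
  field_simp

lemma tendsto_dissipation_div {γ : ℝ} (hγ : γ ≠ 0) :
    Tendsto (fun δ => (dissipationPrimitive γ (1/2) - dissipationPrimitive γ δ) /
        (γ ^ 5 / 6 * cbrtLogInv δ ^ 2)) (𝓝[>] 0) (𝓝 1) := by
  refine tendsto_of_eq_comp_inv_cbrtLogInv (φ := fun t => 1 +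
      6 * dissipationPrimitive γ (1/2) / γ ^ 5 * t ^ 2 + 10 / 9 * t ^ 6 - 20 / 81 * t ^ 12)
    (by fun_prop) (by simp) fun δ hδ => ?_
  have := (cbrtLogInv_pos hδ).ne'
  generalize dissipationPrimitive γ (1/2) = c
  simp only [dissipationPrimitive]
  field_simp
  ring

/-- For `γ > 0` and `f(ξ) = γ ξ (ln(1/ξ))^{1/3}` on `(0,1)`, the quantity
`(γ³/6) f'(δ)² − ∫_δ^{1/2} f³ (f''')² dξ` converges to a finite limit as `δ → 0⁺`,
while each of the two terms is separately asymptotic to `(γ⁵/6)(ln(1/δ))^{2/3}`. -/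
theorem stmt_6 (γ : ℝ) (hγ : 0 < γ)
    (f : ℝ → ℝ) (hf : ∀ ξ ∈ Set.Ioo (0:ℝ) 1, f ξ = γ * ξ * (Real.log (1/ξ)) ^ ((1:ℝ)/3)) :
    (∃ L : ℝ, Tendsto (fun δ : ℝ =>
        γ^3 / 6 * (deriv f δ)^2
          - ∫ ξ in δ..(1/2 : ℝ), (f ξ)^3 * (iteratedDeriv 3 f ξ)^2)
      (𝓝[>] 0) (𝓝 L)) ∧
    Tendsto (fun δ : ℝ =>
        (γ^3 / 6 * (deriv f δ)^2) / (γ^5 / 6 * (Real.log (1/δ)) ^ ((2:ℝ)/3)))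
      (𝓝[>] 0) (𝓝 1) ∧
    Tendsto (fun δ : ℝ =>
        (∫ ξ in δ..(1/2 : ℝ), (f ξ)^3 * (iteratedDeriv 3 f ξ)^2)
          / (γ^5 / 6 * (Real.log (1/δ)) ^ ((2:ℝ)/3)))
      (𝓝[>] 0) (𝓝 1) := by
  have hfp : EqOn f (profile γ) (Ioo 0 1) := fun ξ hξ => by
    rw [hf ξ hξ, profile, cbrtLogInv, one_div, log_inv]
  have hnear : ∀ᶠ δ in 𝓝[>] (0:ℝ), deriv f δ = profileDeriv γ δ ∧
      ∫ ξ in δ..(1/2 : ℝ), f ξ ^ 3 * iteratedDeriv 3 f ξ ^ 2 =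
        dissipationPrimitive γ (1/2) - dissipationPrimitive γ δ ∧
      Real.log (1/δ) ^ ((2:ℝ)/3) = cbrtLogInv δ ^ 2 := by
    filter_upwards [Ioo_mem_nhdsGT (by norm_num : (0:ℝ) < 1/2)] with δ hδ
    have hδ1 : δ ∈ Ioo (0:ℝ) 1 := ⟨hδ.1, hδ.2.trans (by norm_num)⟩
    exact ⟨eqOn_deriv_of_eqOn_profile hfp hδ1,
      integral_dissipation_of_eqOn_profile hfp hδ.1 hδ.2.le (by norm_num),
      (cbrtLogInv_sq hδ1).symm⟩
  refine ⟨⟨_, (tendsto_boundary_sub_dissipation γ).congr' ?_⟩,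
    (tendsto_boundary_div hγ.ne').congr' ?_, (tendsto_dissipation_div hγ.ne').congr' ?_⟩ <;>
  filter_upwards [hnear] with δ ⟨hd, hI, hlog⟩ <;>
  simp only [hd, hI, hlog]
end

section
/- Let n ∈ (0,3) and b > 0, and for y > 0 define Q(y) = ∫_y^∞ 1/(z² + b·z^{n−1}) dz. Then Q is Lebesgue integrable on (0,1), the iterated integral ∫₀^y ∫₀^{z} Q(w) dw dz is finite for every y > 0, and lim_{y→∞} (∫₀^y ∫₀^{z} Q(w) dw dz)/(y·ln y) = 1. -/
/-!
For large `z` the integrand is `z⁻² - O(z^(n-5))`, so `Q w = 1/w - O(w^(n-4))` with an error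
integrable on `[1, ∞)` (as `n < 3`); hence the primitive `F z = ∫₀^z Q` stays within a bounded
distance of `log z`, and integrating once more gives `∫₀^y F = y log y + O(y)`. Near `0` the
denominator dominates `min 1 b · z^β` with `β = max (n - 1) (3/2) < 2`, so `Q y = O(y^(1-β))` is
integrable there.
-/

open Real Filter Set Topology MeasureTheory Asymptotics

theorem intervalIntegral_eq_setIntegral_Ioo {E : Type*} [NormedAddCommGroup E] [NormedSpace ℝ E]
    (f : ℝ → E) {a b : ℝ} (hab : a ≤ b) : ∫ x in a..b, f x = ∫ x in Ioo a b, f x := by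
  rw [intervalIntegral.integral_of_le hab, integral_Ioc_eq_integral_Ioo]

theorem abs_intervalIntegral_sub_log_le {Q g : ℝ → ℝ} {z : ℝ} (hz : 1 ≤ z)
    (hQ : IntervalIntegrable Q volume 0 z) (hg : IntegrableOn g (Ioi 1))
    (hQg : ∀ w, 1 ≤ w → |Q w - w⁻¹| ≤ g w) :
    |(∫ w in (0)..z, Q w) - log z| ≤ |∫ w in (0)..1, Q w| + ∫ w in Ioi 1, g w := by
  have hQ₀ : IntervalIntegrable Q volume 0 1 :=
    hQ.mono_set (uIcc_subset_uIcc_left (by simp [uIcc_of_le (zero_le_one.trans hz), hz]))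
  have hQ₁ : IntervalIntegrable Q volume 1 z :=
    hQ.mono_set (uIcc_subset_uIcc_right (by simp [uIcc_of_le (zero_le_one.trans hz), hz]))
  have hinv : IntervalIntegrable (fun w : ℝ => w⁻¹) volume 1 z :=
    intervalIntegral.intervalIntegrable_inv (fun w hw => by
      rw [uIcc_of_le hz] at hw; exact (zero_lt_one.trans_le hw.1).ne') continuousOn_id
  have hsplit : (∫ w in (0)..z, Q w) - log z
      = (∫ w in (0)..1, Q w) + ∫ w in (1)..z, (Q w - w⁻¹) := by
    rw [← intervalIntegral.integral_add_adjacent_intervals hQ₀ hQ₁,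
      intervalIntegral.integral_sub hQ₁ hinv, integral_inv_of_pos one_pos (by linarith), div_one]
    ring
  have hg₀ : ∀ w ∈ Ioi (1 : ℝ), 0 ≤ g w := fun w hw => (abs_nonneg _).trans (hQg w hw.out.le)
  have htail : |∫ w in (1)..z, (Q w - w⁻¹)| ≤ ∫ w in Ioi 1, g w := calc
    |∫ w in (1)..z, (Q w - w⁻¹)| ≤ ∫ w in (1)..z, g w :=
      Real.norm_eq_abs _ ▸ intervalIntegral.norm_integral_le_of_norm_le hz
        (Eventually.of_forall fun w hw => hQg w hw.1.le)
        ((intervalIntegrable_iff_integrableOn_Ioc_of_le hz).2 (hg.mono_set Ioc_subset_Ioi_self))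
    _ = ∫ w in Ioc 1 z, g w := intervalIntegral.integral_of_le hz
    _ ≤ ∫ w in Ioi 1, g w :=
      setIntegral_mono_set hg (ae_restrict_of_forall_mem measurableSet_Ioi hg₀)
        Ioc_subset_Ioi_self.eventuallyLE
  rw [hsplit]
  exact (abs_add_le _ _).trans (by linarith)

theorem isEquivalent_intervalIntegral_mul_log {F : ℝ → ℝ} {K : ℝ}
    (hF : ∀ y, 1 ≤ y → IntervalIntegrable F volume 0 y)
    (hK : ∀ z, 1 ≤ z → |F z - log z| ≤ K) :
    (fun y => ∫ z in (0)..y, F z) ~[atTop] fun y => y * log y := by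
  set c := (∫ z in (0)..1, F z) + 1
  have hK₀ : 0 ≤ K := (abs_nonneg _).trans (hK 1 le_rfl)
  have hsplit : ∀ y, 1 ≤ y → (∫ z in (0)..y, F z) - y * log y
      = c - y + ∫ z in (1)..y, (F z - log z) := by
    intro y hy
    have hF₁ : IntervalIntegrable F volume 1 y :=
      (hF y hy).mono_set
        (uIcc_subset_uIcc_right (by simp [uIcc_of_le (zero_le_one.trans hy), hy]))
    rw [← intervalIntegral.integral_add_adjacent_intervals (hF 1 le_rfl) hF₁,
      intervalIntegral.integral_sub hF₁ intervalIntegral.intervalIntegrable_log', integral_log]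
    simp only [c, log_one]
    ring
  have hremainder : (fun y => (∫ z in (0)..y, F z) - y * log y) =O[atTop] fun y => y := by
    refine IsBigO.of_bound (|c| + 1 + K) ?_
    filter_upwards [eventually_ge_atTop 1] with y hy
    have hdev : |∫ z in (1)..y, (F z - log z)| ≤ K * (y - 1) := by
      have := intervalIntegral.norm_integral_le_of_norm_le_const (a := 1) (b := y) (C := K)
        (f := fun z => F z - log z) fun z hz => hK z (by rw [uIoc_of_le hy] at hz; exact hz.1.le)
      rwa [abs_of_nonneg (by linarith : 0 ≤ y - 1)] at this
    rw [hsplit y hy, Real.norm_eq_abs, Real.norm_eq_abs, abs_of_nonneg (by linarith : 0 ≤ y)]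
    calc |c - y + ∫ z in (1)..y, (F z - log z)|
        ≤ |c| + y + K * (y - 1) := by
          refine (abs_add_le _ _).trans (add_le_add ((abs_sub _ _).trans ?_) hdev)
          rw [abs_of_nonneg (by linarith : 0 ≤ y)]
      _ ≤ (|c| + 1 + K) * y := by nlinarith [abs_nonneg c]
  have hlog : (fun y : ℝ => y) =o[atTop] fun y => y * log y := by
    simpa [mul_comm] using
      (isLittleO_const_log_atTop (c := (1 : ℝ))).mul_isBigO (isBigO_refl (fun y : ℝ => y) atTop)
  exact hremainder.trans_isLittleO hlog

noncomputable def slipIntegrand (n b z : ℝ) : ℝ := 1 / (z ^ 2 + b * z ^ (n - 1))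

noncomputable def slipKernel (n b y : ℝ) : ℝ := ∫ z in Ioi y, slipIntegrand n b z

section SlipKernel

variable {n b : ℝ}

lemma slipIntegrand_pos (hb : 0 ≤ b) {z : ℝ} (hz : 0 < z) : 0 < slipIntegrand n b z := by
  rw [slipIntegrand]; positivity

lemma continuousOn_slipIntegrand (hb : 0 ≤ b) : ContinuousOn (slipIntegrand n b) (Ioi 0) :=
  continuousOn_const.div ((continuousOn_pow 2).add (continuousOn_const.mul
    (continuousOn_id.rpow_const fun _ hz => Or.inl (ne_of_gt hz)))) fun _ hz =>
      (one_div_pos.1 (slipIntegrand_pos hb hz)).ne'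

lemma slipIntegrand_le_rpow_neg_two (hb : 0 ≤ b) {z : ℝ} (hz : 0 < z) :
    slipIntegrand n b z ≤ z ^ (-2 : ℝ) := by
  rw [slipIntegrand, rpow_neg hz.le, rpow_two, ← one_div]
  exact one_div_le_one_div_of_le (by positivity) (le_add_of_nonneg_right (by positivity))

lemma min_mul_rpow_le_sq_add_mul_rpow (hb : 0 ≤ b) {β z : ℝ} (hnβ : n - 1 ≤ β) (hβ : β ≤ 2)
    (hz : 0 < z) : min 1 b * z ^ β ≤ z ^ 2 + b * z ^ (n - 1) := by
  rcases le_total z 1 with hz1 | hz1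
  · calc min 1 b * z ^ β ≤ b * z ^ (n - 1) :=
          mul_le_mul (min_le_right _ _) (rpow_le_rpow_of_exponent_ge hz hz1 hnβ)
            (by positivity) hb
      _ ≤ z ^ 2 + b * z ^ (n - 1) := le_add_of_nonneg_left (by positivity)
  · calc min 1 b * z ^ β ≤ 1 * z ^ (2 : ℝ) :=
          mul_le_mul (min_le_left _ _) (rpow_le_rpow_of_exponent_le hz1 hβ)
            (by positivity) zero_le_one
      _ ≤ z ^ 2 + b * z ^ (n - 1) := by
          rw [one_mul, rpow_two]; exact le_add_of_nonneg_right (by positivity)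

lemma slipIntegrand_le_rpow (hb : 0 < b) {β z : ℝ} (hnβ : n - 1 ≤ β) (hβ : β ≤ 2) (hz : 0 < z) :
    slipIntegrand n b z ≤ (min 1 b)⁻¹ * z ^ (-β) := by
  rw [slipIntegrand, rpow_neg hz.le, ← mul_inv, ← one_div]
  exact one_div_le_one_div_of_le (by positivity) (min_mul_rpow_le_sq_add_mul_rpow hb.le hnβ hβ hz)

lemma rpow_neg_two_sub_slipIntegrand_le (hb : 0 ≤ b) {z : ℝ} (hz : 0 < z) :
    z ^ (-2 : ℝ) - slipIntegrand n b z ≤ b * z ^ (n - 5) := by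
  have hpow : z ^ (n - 5) = z ^ (n - 1) / (z ^ 2 * z ^ 2) := by
    rw [rpow_sub hz, rpow_sub hz, show (5 : ℝ) = (4 : ℕ) + 1 by norm_num, rpow_add hz,
      rpow_natCast, rpow_one]
    field_simp
  have hu : 0 ≤ b * z ^ (n - 1) := by positivity
  rw [slipIntegrand, rpow_neg hz.le, rpow_two, hpow, inv_eq_one_div,
    div_sub_div _ _ (by positivity) (by positivity), mul_div_assoc',
    div_le_div_iff₀ (by positivity) (by positivity)]
  nlinarith [mul_nonneg (mul_nonneg hu hu) (pow_pos hz 2).le]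

lemma integrableOn_slipIntegrand (hb : 0 ≤ b) {y : ℝ} (hy : 0 < y) :
    IntegrableOn (slipIntegrand n b) (Ioi y) := by
  refine (integrableOn_Ioi_rpow_of_lt (by norm_num : (-2 : ℝ) < -1) hy).mono'
    (((continuousOn_slipIntegrand hb).mono (Ioi_subset_Ioi hy.le)).aestronglyMeasurable
      measurableSet_Ioi) (ae_restrict_of_forall_mem measurableSet_Ioi fun z hz => ?_)
  have hz : 0 < z := hy.trans hz
  rw [Real.norm_of_nonneg (slipIntegrand_pos hb hz).le]
  exact slipIntegrand_le_rpow_neg_two hb hz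

lemma slipKernel_nonneg (hb : 0 ≤ b) {y : ℝ} (hy : 0 ≤ y) : 0 ≤ slipKernel n b y :=
  setIntegral_nonneg measurableSet_Ioi fun _ hz => (slipIntegrand_pos hb (hy.trans_lt hz)).le

lemma slipKernel_le_inv (hb : 0 ≤ b) {y : ℝ} (hy : 0 < y) : slipKernel n b y ≤ y⁻¹ := calc
  slipKernel n b y ≤ ∫ z in Ioi y, z ^ (-2 : ℝ) :=
    setIntegral_mono_on (integrableOn_slipIntegrand hb hy)
      (integrableOn_Ioi_rpow_of_lt (by norm_num) hy) measurableSet_Ioi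
      fun z hz => slipIntegrand_le_rpow_neg_two hb (hy.trans hz)
  _ = y⁻¹ := by rw [integral_Ioi_rpow_of_lt (by norm_num) hy]; norm_num [rpow_neg_one]

lemma inv_sub_slipKernel_le (hn : n < 4) (hb : 0 ≤ b) {y : ℝ} (hy : 0 < y) :
    y⁻¹ - slipKernel n b y ≤ b / (4 - n) * y ^ (n - 4) := by
  have hinv : ∫ z in Ioi y, z ^ (-2 : ℝ) = y⁻¹ := by
    rw [integral_Ioi_rpow_of_lt (by norm_num) hy]; norm_num [rpow_neg_one]
  have hrpow : ∫ z in Ioi y, b * z ^ (n - 5) = b / (4 - n) * y ^ (n - 4) := by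
    rw [integral_const_mul, integral_Ioi_rpow_of_lt (by linarith) hy,
      show n - 5 + 1 = n - 4 by ring]
    field_simp [show (4 : ℝ) - n ≠ 0 by linarith, show n - 4 ≠ 0 by linarith]
    ring
  have hint : IntegrableOn (fun z : ℝ => z ^ (-2 : ℝ)) (Ioi y) :=
    integrableOn_Ioi_rpow_of_lt (by norm_num) hy
  rw [← hinv, ← hrpow, slipKernel, ← integral_sub hint (integrableOn_slipIntegrand hb hy)]
  exact setIntegral_mono_on (hint.sub (integrableOn_slipIntegrand hb hy))
    ((integrableOn_Ioi_rpow_of_lt (by linarith) hy).const_mul b) measurableSet_Ioi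
    fun z hz => rpow_neg_two_sub_slipIntegrand_le hb (hy.trans hz)

lemma abs_slipKernel_sub_inv_le (hn : n < 4) (hb : 0 ≤ b) {y : ℝ} (hy : 0 < y) :
    |slipKernel n b y - y⁻¹| ≤ b / (4 - n) * y ^ (n - 4) := by
  rw [abs_sub_comm, abs_of_nonneg (sub_nonneg.2 (slipKernel_le_inv hb hy))]
  exact inv_sub_slipKernel_le hn hb hy

lemma slipKernel_le_rpow (hb : 0 < b) {β : ℝ} (hnβ : n - 1 ≤ β) (hβ₁ : 1 < β) (hβ₂ : β ≤ 2)
    {y : ℝ} (hy : 0 < y) : slipKernel n b y ≤ (min 1 b)⁻¹ / (β - 1) * y ^ (1 - β) := calc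
  slipKernel n b y ≤ ∫ z in Ioi y, (min 1 b)⁻¹ * z ^ (-β) :=
    setIntegral_mono_on (integrableOn_slipIntegrand hb.le hy)
      ((integrableOn_Ioi_rpow_of_lt (by linarith) hy).const_mul _) measurableSet_Ioi
      fun z hz => slipIntegrand_le_rpow hb hnβ hβ₂ (hy.trans hz)
  _ = (min 1 b)⁻¹ / (β - 1) * y ^ (1 - β) := by
    rw [integral_const_mul, integral_Ioi_rpow_of_lt (by linarith) hy,
      show -β + 1 = 1 - β by ring]
    field_simp [show β - 1 ≠ 0 by linarith, show 1 - β ≠ 0 by linarith]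
    ring

lemma antitoneOn_slipKernel (hb : 0 ≤ b) : AntitoneOn (slipKernel n b) (Ioi 0) :=
  fun _ hy₁ _ _ hy => setIntegral_mono_set (integrableOn_slipIntegrand hb hy₁)
    (ae_restrict_of_forall_mem measurableSet_Ioi fun _ hz =>
      (slipIntegrand_pos hb ((show (0 : ℝ) < _ from hy₁).trans hz)).le)
    (Ioi_subset_Ioi hy).eventuallyLE

lemma integrableOn_slipKernel (hn : n < 3) (hb : 0 < b) (c : ℝ) :
    IntegrableOn (slipKernel n b) (Ioc 0 c) := by
  set β := max (n - 1) (3 / 2)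
  have hβ₁ : 1 < β := lt_max_of_lt_right (by norm_num)
  have hβ₂ : β < 2 := max_lt (by linarith) (by norm_num)
  refine ((intervalIntegral.intervalIntegrable_rpow' (a := 0) (b := c)
      (by linarith : -1 < 1 - β)).1.const_mul ((min 1 b)⁻¹ / (β - 1))).mono'
    ((aemeasurable_restrict_of_antitoneOn measurableSet_Ioc
      ((antitoneOn_slipKernel hb.le).mono fun _ hy => hy.1)).aestronglyMeasurable)
    (ae_restrict_of_forall_mem measurableSet_Ioc fun y hy => ?_)
  rw [Real.norm_of_nonneg (slipKernel_nonneg hb.le hy.1.le)]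
  exact slipKernel_le_rpow hb (le_max_left _ _) hβ₁ hβ₂.le hy.1

end SlipKernel

/-- For `n ∈ (0,3)`, `b > 0` and `Q(y) = ∫_y^∞ dz/(z² + b z^{n−1})`: `Q` is Lebesgue
integrable on `(0,1)`, the iterated integral `∫₀^y ∫₀^z Q(w) dw dz` is finite for every
`y > 0`, and it is asymptotic to `y ln y` as `y → ∞`. -/
theorem stmt_14 (n b : ℝ) (hn : n ∈ Set.Ioo (0:ℝ) 3) (hb : 0 < b)
    (Q : ℝ → ℝ)
    (hQ : ∀ y : ℝ, 0 < y → Q y = ∫ z in Set.Ioi y, 1 / (z^2 + b * z ^ (n - 1))) :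
    IntegrableOn Q (Set.Ioo 0 1) ∧
    (∀ y : ℝ, 0 < y → IntegrableOn Q (Set.Ioo 0 y) ∧
      IntegrableOn (fun z => ∫ w in Set.Ioo (0:ℝ) z, Q w) (Set.Ioo 0 y)) ∧
    Tendsto (fun y : ℝ =>
        (∫ z in Set.Ioo (0:ℝ) y, ∫ w in Set.Ioo (0:ℝ) z, Q w) / (y * Real.log y))
      atTop (𝓝 1) := by
  have hQ' : EqOn Q (slipKernel n b) (Ioi 0) := hQ
  have hQint : ∀ c, 0 ≤ c → IntervalIntegrable Q volume 0 c := fun c hc =>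
    (intervalIntegrable_iff_integrableOn_Ioc_of_le hc).2 <|
      (integrableOn_slipKernel hn.2 hb c).congr_fun (hQ'.symm.mono Ioc_subset_Ioi_self)
        measurableSet_Ioc
  set P : ℝ → ℝ := fun z => ∫ w in (0)..z, Q w
  have hFP : EqOn (fun z => ∫ w in Ioo 0 z, Q w) P (Ici 0) := fun z hz =>
    (intervalIntegral_eq_setIntegral_Ioo Q hz).symm
  have hPint : ∀ y, 0 ≤ y → IntervalIntegrable P volume 0 y := fun y hy =>
    (intervalIntegral.continuousOn_primitive_interval' (hQint y hy)
      left_mem_uIcc).intervalIntegrable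
  refine ⟨(hQint 1 zero_le_one).1.mono_set Ioo_subset_Ioc_self, fun y hy =>
    ⟨(hQint y hy.le).1.mono_set Ioo_subset_Ioc_self,
      ((hPint y hy.le).1.mono_set Ioo_subset_Ioc_self).congr_fun
        (hFP.symm.mono fun z hz => hz.1.le) measurableSet_Ioo⟩, ?_⟩
  have hlog : ∀ z, 1 ≤ z → |P z - log z| ≤
      |∫ w in (0)..1, Q w| + ∫ w in Ioi 1, b / (4 - n) * w ^ (n - 4) := fun z hz =>
    abs_intervalIntegral_sub_log_le hz (hQint z (by linarith))
      ((integrableOn_Ioi_rpow_of_lt (by linarith [hn.2]) one_pos).const_mul _)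
      fun w hw => hQ' (zero_lt_one.trans_le hw) ▸
        abs_slipKernel_sub_inv_le (by linarith [hn.2]) hb.le (zero_lt_one.trans_le hw)
  have hequiv := isEquivalent_intervalIntegral_mul_log (fun y hy => hPint y (by linarith)) hlog
  refine ((isEquivalent_iff_tendsto_one ?_).1 hequiv).congr' ?_
  · filter_upwards [eventually_gt_atTop 1] with y hy
    exact (mul_pos (by linarith) (log_pos hy)).ne'
  · filter_upwards [eventually_ge_atTop 0] with y hy
    rw [Pi.div_apply, ← intervalIntegral_eq_setIntegral_Ioo _ hy, intervalIntegral.integral_congr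
      (hFP.mono (by rw [uIcc_of_le hy]; exact Icc_subset_Ici_self))]
end

section
/- Let γ > 0 and define f : (0,1) → ℝ by f(ξ) = γ·ξ·(ln(1/ξ))^{1/3}. Then (ln(1/ξ))^{1/3}·f(ξ)³·f''(ξ)·f'''(ξ) → −γ⁵/9 as ξ → 0⁺. In particular, f(ξ)³·f''(ξ)·f'''(ξ) → 0 as ξ → 0⁺. -/
/-!
Write `L = ln(1/ξ)`. Since `L' = -1/ξ` and `(L^{1/3})' = -L^{1/3}/(3ξL)`, every derivative of
`f = γ ξ L^{1/3}` is `γ L^{1/3}` times a rational function of `ξ` and `L`: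
`f'' = -γ L^{1/3} (3L + 2) / (9 ξ L²)` and `f''' = γ L^{1/3} (9L² - 10) / (27 ξ² L³)`.
In `L^{1/3} f³ f'' f'''` the powers of `ξ` cancel and `(L^{1/3})⁶ = L²`, leaving
`-(γ⁵/9) (1 + 2/(3L)) (1 - 10/(9L²))`, which tends to `-γ⁵/9` as `L → ∞`.
Dividing by `L^{1/3} → ∞` gives the second limit.
-/

open Real Filter Set Topology

theorem eqOn_deriv_of_hasDerivAt {f g g' : ℝ → ℝ} {s : Set ℝ} (hs : IsOpen s) (hfg : EqOn f g s)
    (hg : ∀ x ∈ s, HasDerivAt g (g' x) x) : EqOn (deriv f) g' s :=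
  fun x hx => (hfg.deriv hs hx).trans (hg x hx).deriv

lemma neg_log_pos_of_mem_Ioo {x : ℝ} (hx : x ∈ Ioo (0 : ℝ) 1) : 0 < -log x :=
  neg_pos.2 (log_neg hx.1 hx.2)

lemma hasDerivAt_neg_log {x : ℝ} (hx : x ∈ Ioo (0 : ℝ) 1) :
    HasDerivAt (fun y => -log y) (-x⁻¹) x :=
  (hasDerivAt_log hx.1.ne').neg

lemma hasDerivAt_neg_log_rpow (a : ℝ) {x : ℝ} (hx : x ∈ Ioo (0 : ℝ) 1) :
    HasDerivAt (fun y => (-log y) ^ a) (-(a * (-log x) ^ a) / (x * -log x)) x := by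
  have hL := neg_log_pos_of_mem_Ioo hx
  refine ((hasDerivAt_neg_log hx).rpow_const (p := a) (Or.inl hL.ne')).congr_deriv ?_
  rw [rpow_sub_one hL.ne']
  field_simp

section Profile

variable (γ : ℝ) {x : ℝ}

lemma hasDerivAt_profile_s15 (hx : x ∈ Ioo (0 : ℝ) 1) :
    HasDerivAt (fun y => γ * y * (-log y) ^ (1 / 3 : ℝ))
      (γ * (-log x) ^ (1 / 3 : ℝ) * (3 * -log x - 1) / (3 * -log x)) x := by
  have hL := neg_log_pos_of_mem_Ioo hx
  have hx0 := hx.1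
  refine (((hasDerivAt_id' x).const_mul γ).mul
    (hasDerivAt_neg_log_rpow (1 / 3) hx)).congr_deriv ?_
  set L := -log x
  field_simp
  ring

lemma hasDerivAt_profile_deriv (hx : x ∈ Ioo (0 : ℝ) 1) :
    HasDerivAt (fun y => γ * (-log y) ^ (1 / 3 : ℝ) * (3 * -log y - 1) / (3 * -log y))
      (-(γ * (-log x) ^ (1 / 3 : ℝ) * (3 * -log x + 2)) / (9 * x * (-log x) ^ 2)) x := by
  have hL := neg_log_pos_of_mem_Ioo hx
  have hlog := hasDerivAt_neg_log hx
  refine ((((hasDerivAt_neg_log_rpow (1 / 3) hx).const_mul γ).mul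
    ((hlog.const_mul 3).sub_const 1)).div (hlog.const_mul 3) (by positivity)).congr_deriv ?_
  simp only [Pi.mul_apply]
  set L := -log x
  field_simp
  ring

lemma hasDerivAt_profile_deriv_deriv (hx : x ∈ Ioo (0 : ℝ) 1) :
    HasDerivAt
      (fun y => -(γ * (-log y) ^ (1 / 3 : ℝ) * (3 * -log y + 2)) / (9 * y * (-log y) ^ 2))
      (γ * (-log x) ^ (1 / 3 : ℝ) * (9 * (-log x) ^ 2 - 10) / (27 * x ^ 2 * (-log x) ^ 3)) x := by
  have hL := neg_log_pos_of_mem_Ioo hx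
  have hlog := hasDerivAt_neg_log hx
  have hx0 := hx.1
  have hden : (9 * x * (-log x) ^ 2) ≠ 0 := by positivity
  refine ((((hasDerivAt_neg_log_rpow (1 / 3) hx).const_mul γ).mul
    ((hlog.const_mul 3).add_const 2)).neg.div
    (((hasDerivAt_id' x).const_mul 9).mul (hlog.pow 2)) hden).congr_deriv ?_
  simp only [Pi.mul_apply, Pi.neg_apply, Pi.pow_apply]
  set L := -log x
  field_simp
  ring

lemma profile_product_eq {x L : ℝ} (hx : x ≠ 0) (hL : 0 < L) :
    L ^ (1 / 3 : ℝ) * (γ * x * L ^ (1 / 3 : ℝ)) ^ 3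
      * (-(γ * L ^ (1 / 3 : ℝ) * (3 * L + 2)) / (9 * x * L ^ 2))
      * (γ * L ^ (1 / 3 : ℝ) * (9 * L ^ 2 - 10) / (27 * x ^ 2 * L ^ 3))
      = -(γ ^ 5) / 9 * ((1 + 2 / 3 * L⁻¹) * (1 - 10 / 9 * L⁻¹ ^ 2)) := by
  have hcube : (L ^ (1 / 3 : ℝ)) ^ 3 = L := by
    rw [← rpow_natCast, ← rpow_mul hL.le]
    norm_num
  generalize L ^ (1 / 3 : ℝ) = u at hcube ⊢
  subst hcube
  have hu : u ≠ 0 := by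
    rintro rfl
    simp at hL
  field_simp
  ring

lemma tendsto_profile_product_atTop :
    Tendsto (fun L : ℝ => -(γ ^ 5) / 9 * ((1 + 2 / 3 * L⁻¹) * (1 - 10 / 9 * L⁻¹ ^ 2)))
      atTop (𝓝 (-(γ ^ 5) / 9)) := by
  have hinv := tendsto_inv_atTop_zero (𝕜 := ℝ)
  simpa using (((hinv.const_mul (2 / 3)).const_add 1).mul
    (((hinv.pow 2).const_mul (10 / 9)).const_sub 1)).const_mul (-(γ ^ 5) / 9)

end Profile

theorem stmt_15_general (γ : ℝ)
    (f : ℝ → ℝ) (hf : ∀ ξ ∈ Set.Ioo (0:ℝ) 1, f ξ = γ * ξ * (Real.log (1/ξ)) ^ ((1:ℝ)/3)) :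
    Tendsto (fun ξ => (Real.log (1/ξ)) ^ ((1:ℝ)/3) * (f ξ)^3
        * iteratedDeriv 2 f ξ * iteratedDeriv 3 f ξ) (𝓝[>] 0) (𝓝 (-(γ^5) / 9)) ∧
    Tendsto (fun ξ => (f ξ)^3 * iteratedDeriv 2 f ξ * iteratedDeriv 3 f ξ)
      (𝓝[>] 0) (𝓝 0) := by
  have hf₀ : EqOn f (fun y => γ * y * (-log y) ^ (1 / 3 : ℝ)) (Ioo 0 1) := fun y hy => by
    rw [hf y hy, one_div, log_inv]
  have hf₂ := eqOn_deriv_of_hasDerivAt isOpen_Ioo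
    (eqOn_deriv_of_hasDerivAt isOpen_Ioo hf₀ fun _ => hasDerivAt_profile_s15 γ)
    fun _ => hasDerivAt_profile_deriv γ
  have hf₃ := eqOn_deriv_of_hasDerivAt isOpen_Ioo hf₂ fun _ => hasDerivAt_profile_deriv_deriv γ
  have hprod : ∀ ξ ∈ Ioo (0 : ℝ) 1,
      log (1 / ξ) ^ (1 / 3 : ℝ) * f ξ ^ 3 * iteratedDeriv 2 f ξ * iteratedDeriv 3 f ξ
        = -(γ ^ 5) / 9 * ((1 + 2 / 3 * (-log ξ)⁻¹) * (1 - 10 / 9 * (-log ξ)⁻¹ ^ 2)) := by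
    intro ξ hξ
    rw [iteratedDeriv_eq_iterate, iteratedDeriv_eq_iterate, hf₀ hξ]
    simp only [Function.iterate_succ, Function.iterate_zero, Function.comp_apply, id]
    rw [hf₂ hξ, hf₃ hξ, one_div, log_inv]
    exact profile_product_eq γ hξ.1.ne' (neg_log_pos_of_mem_Ioo hξ)
  have hIoo : Ioo (0 : ℝ) 1 ∈ 𝓝[>] 0 := Ioo_mem_nhdsGT zero_lt_one
  have hlog : Tendsto (fun ξ => -log ξ) (𝓝[>] 0) atTop :=
    tendsto_neg_atBot_atTop.comp tendsto_log_nhdsGT_zero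
  have hfirst := ((tendsto_profile_product_atTop γ).comp hlog).congr'
    (eventually_of_mem hIoo fun ξ hξ => (hprod ξ hξ).symm)
  refine ⟨hfirst, ?_⟩
  refine (hfirst.div_atTop ((tendsto_rpow_atTop (y := 1 / 3) (by norm_num)).comp hlog)).congr'
    (eventually_of_mem hIoo fun ξ hξ => ?_)
  have hu : (-log ξ) ^ (1 / 3 : ℝ) ≠ 0 := (rpow_pos_of_pos (neg_log_pos_of_mem_Ioo hξ) _).ne'
  rw [Function.comp_apply, one_div ξ, log_inv]
  field_simp

/-- For `γ > 0` and `f(ξ) = γ ξ (ln(1/ξ))^{1/3}` on `(0,1)`,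
`(ln(1/ξ))^{1/3} f³ f'' f''' → −γ⁵/9` and in particular `f³ f'' f''' → 0` as `ξ → 0⁺`. -/
theorem stmt_15 (γ : ℝ) (hγ : 0 < γ)
    (f : ℝ → ℝ) (hf : ∀ ξ ∈ Set.Ioo (0:ℝ) 1, f ξ = γ * ξ * (Real.log (1/ξ)) ^ ((1:ℝ)/3)) :
    Tendsto (fun ξ => (Real.log (1/ξ)) ^ ((1:ℝ)/3) * (f ξ)^3
        * iteratedDeriv 2 f ξ * iteratedDeriv 3 f ξ) (𝓝[>] 0) (𝓝 (-(γ^5) / 9)) ∧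
    Tendsto (fun ξ => (f ξ)^3 * iteratedDeriv 2 f ξ * iteratedDeriv 3 f ξ)
      (𝓝[>] 0) (𝓝 0) :=
  stmt_15_general γ f hf
end
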